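/- arXiv:1901.02927 — 10 statements merged into one kernel-verified Lean document; each statement's English description precedes it below -/
import Mathlib

section
/- Let H be a submonoid of ℕ^k with H ≠ {0} which is free, i.e., isomorphic as an additive monoid to ℕ^n for some n ≥ 1. Then ind H = n; in particular, H is isomorphic to a submonoid of ℕ^n, and whenever H is isomorphic to a submonoid of ℕ^r with r ≥ 1, one has r ≥ n. -/
def coordFn {k : ℕ} (A : Set (Fin k → ℕ)) (i : Fin k) : A → ℚ :=
  fun f => ((f : Fin k → ℕ) i : ℚ)

def IndepOver {k : ℕ} (X : Finset (Fin k)) (A : Set (Fin k → ℕ)) : Prop :=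
  LinearIndependent ℚ (fun i : X => coordFn A i.1)

def MaxIndepOver {k : ℕ} (X : Finset (Fin k)) (A : Set (Fin k → ℕ)) : Prop :=
  IndepOver X A ∧ ∀ Y : Finset (Fin k), X ⊂ Y → ¬ IndepOver Y A

open Pointwise in
def beta {k : ℕ} (H : AddSubmonoid (Fin k → ℕ)) : Set (Fin k → ℕ) :=
  ((H : Set (Fin k → ℕ)) \ {0}) \
    (((H : Set (Fin k → ℕ)) \ {0}) + ((H : Set (Fin k → ℕ)) \ {0}))

def restrictHom {k : ℕ} (X : Finset (Fin k)) : (Fin k → ℕ) →+ (Fin X.card → ℕ) where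
  toFun h := fun j => h (X.orderIsoOfFin rfl j).1
  map_zero' := rfl
  map_add' _ _ := rfl

def IsoToSub {k : ℕ} (H : AddSubmonoid (Fin k → ℕ)) (r : ℕ) : Prop :=
  ∃ K : AddSubmonoid (Fin r → ℕ), Nonempty (H ≃+ K)


theorem injLe {n r : ℕ} (f : (Fin n → ℕ) →+ (Fin r → ℕ)) (hf : Function.Injective f) :
    n ≤ r := by
  set M : Matrix (Fin r) (Fin n) ℤ := Matrix.of fun j i => (f (Pi.single i 1) j : ℤ) with hM
  set F : (Fin n → ℤ) →ₗ[ℤ] (Fin r → ℤ) := M.mulVecLin with hF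
  have keyA : ∀ a : Fin n → ℕ, F (fun i => (a i : ℤ)) = fun j => (f a j : ℤ) := by
    intro a
    have ha : a = ∑ i, a i • Pi.single i (1:ℕ) := by
      have := Finset.univ_sum_single a
      rw [← this]
      refine Finset.sum_congr rfl fun i _ => ?_
      funext j
      simp [Pi.single_apply]
    funext j
    have : f a = ∑ i, a i • f (Pi.single i 1) := by
      conv_lhs => rw [ha]
      rw [map_sum]
      simp only [map_nsmul]
    rw [this]
    simp only [hF, Matrix.mulVecLin_apply, Matrix.mulVec, dotProduct, hM,
      Matrix.of_apply, Finset.sum_apply, Pi.smul_apply, smul_eq_mul]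
    push_cast
    ring_nf
    refine Finset.sum_congr rfl fun i _ => by ring
  have hFinj : Function.Injective F := by
    rw [injective_iff_map_eq_zero]
    intro w hw
    set a : Fin n → ℕ := fun i => (w i).toNat with haa
    set b : Fin n → ℕ := fun i => (-(w i)).toNat with hbb
    have hw' : ∀ i, ((a i : ℤ)) - (b i : ℤ) = w i := by
      intro i; simpa [haa, hbb] using Int.toNat_sub_toNat_neg (w i)
    have hab : F (fun i => (a i : ℤ)) = F (fun i => (b i : ℤ)) := by
      have : (fun i => (a i : ℤ)) = w + fun i => (b i : ℤ) := by
        funext i; have := hw' i; simp [Pi.add_apply]; linarith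
      rw [this, map_add, hw, zero_add]
    rw [keyA a, keyA b] at hab
    have : f a = f b := by
      funext j
      have := congrFun hab j
      exact_mod_cast this
    have : a = b := hf this
    funext i
    rw [← hw' i, this]
    simp
  calc n = Module.finrank ℤ (Fin n → ℤ) := (Module.finrank_fin_fun ℤ).symm
    _ ≤ Module.finrank ℤ (Fin r → ℤ) := LinearMap.finrank_le_finrank_of_injective hFinj
    _ = r := Module.finrank_fin_fun ℤ


noncomputable def indOf {k : ℕ} (H : AddSubmonoid (Fin k → ℕ)) : ℕ :=
  sInf {r : ℕ | 1 ≤ r ∧ IsoToSub H r}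


theorem statement1 {k n : ℕ} (hk : 0 < k) (hn : 1 ≤ n)
    (H : AddSubmonoid (Fin k → ℕ)) (hH : H ≠ ⊥)
    (hfree : Nonempty (H ≃+ (Fin n → ℕ))) :
    indOf H = n ∧ IsoToSub H n ∧ ∀ r : ℕ, 1 ≤ r → IsoToSub H r → n ≤ r := by
  obtain ⟨e⟩ := hfree
  have hex : IsoToSub H n := ⟨⊤, ⟨e.trans (AddSubmonoid.topEquiv).symm⟩⟩
  have hlb : ∀ r : ℕ, 1 ≤ r → IsoToSub H r → n ≤ r := by
    rintro r _ ⟨K, ⟨e2⟩⟩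
    exact injLe ((AddSubmonoid.subtype K).comp (e.symm.trans e2).toAddMonoidHom)
      (Subtype.coe_injective.comp (e.symm.trans e2).injective)
  refine ⟨?_, hex, hlb⟩
  have hmem : n ∈ {r : ℕ | 1 ≤ r ∧ IsoToSub H r} := ⟨hn, hex⟩
  refine le_antisymm (Nat.sInf_le hmem) (le_csInf ⟨n, hmem⟩ ?_)
  rintro r ⟨h1, h2⟩
  exact hlb r h1 h2
end

section
/- Let H be a submonoid of ℕ^k and X a nonempty subset of {1,…,k}. Assume that for every j ∈ {1,…,k} \ X, the coordinate function α_j^H lies in the ℚ-linear span of {α_i^H : i ∈ X} in the ℚ-vector space of functions H → ℚ. Then the map φ : H → H|X given by φ(h) = h|X is an isomorphism of additive monoids (additive and bijective) from H onto H|X. -/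
theorem statement2 {k : ℕ} (hk : 0 < k) (H : AddSubmonoid (Fin k → ℕ))
    (X : Finset (Fin k)) (hX : X.Nonempty)
    (hspan : ∀ j : Fin k, j ∉ X →
      coordFn (H : Set (Fin k → ℕ)) j ∈
        Submodule.span ℚ
          ((fun i => coordFn (H : Set (Fin k → ℕ)) i) '' (X : Set (Fin k)))) :
    Function.Bijective ((restrictHom X).addSubmonoidMap H) := by
  constructor
  · intro a b hab
    have h2 : restrictHom X a.1 = restrictHom X b.1 := congrArg Subtype.val hab
    have hval : ∀ i ∈ X, (a.1 : Fin k → ℕ) i = (b.1 : Fin k → ℕ) i := by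
      intro i hi
      obtain ⟨j, hj⟩ := (X.orderIsoOfFin rfl).surjective ⟨i, hi⟩
      have hji : ((X.orderIsoOfFin rfl j : Fin k)) = i := congrArg Subtype.val hj
      have h3 : a.1 ((X.orderIsoOfFin rfl j).1) = b.1 ((X.orderIsoOfFin rfl j).1) :=
        congrFun h2 j
      rwa [hji] at h3
    set A : Set (Fin k → ℕ) := (H : Set (Fin k → ℕ))
    set D : (A → ℚ) →ₗ[ℚ] ℚ :=
      (LinearMap.proj (⟨a.1, a.2⟩ : A) : (A → ℚ) →ₗ[ℚ] ℚ) -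
        (LinearMap.proj (⟨b.1, b.2⟩ : A) : (A → ℚ) →ₗ[ℚ] ℚ) with hD
    have hDapp : ∀ f : A → ℚ, D f = f ⟨a.1, a.2⟩ - f ⟨b.1, b.2⟩ := fun f => rfl
    have hsub : ((fun i => coordFn A i) '' (X : Set (Fin k))) ⊆ (LinearMap.ker D : Set (A → ℚ)) := by
      rintro _ ⟨i, hi, rfl⟩
      simp only [SetLike.mem_coe, LinearMap.mem_ker, hDapp]
      have := hval i hi
      simp [coordFn, this]
    have hle := Submodule.span_le.mpr hsub
    have hall : ∀ i : Fin k, (a.1 : Fin k → ℕ) i = (b.1 : Fin k → ℕ) i := by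
      intro i
      by_cases hi : i ∈ X
      · exact hval i hi
      · have := hle (hspan i hi)
        rw [LinearMap.mem_ker, hDapp] at this
        have : ((a.1 i : ℚ)) = (b.1 i : ℚ) := by
          have := sub_eq_zero.mp this
          simpa [coordFn] using this
        exact_mod_cast this
    exact Subtype.ext (funext hall)
  · rintro ⟨y, hy⟩
    obtain ⟨h, hh, rfl⟩ := hy
    exact ⟨⟨h, hh⟩, rfl⟩
end

section
/- Let H be a submonoid of ℕ^k with H ≠ {0}, and let X be a nonempty subset of {1,…,k}. Then X is independent over H if and only if X is independent over β(H). -/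
/-! Every combination `∑ i ∈ X, c i * α_i` is additive on `ℕ^k`, so it vanishes on a set exactly
when it vanishes on the submonoid generated by that set; hence independence over `A` and over
`closure A` agree. And `β(H)` generates `H`, by induction on the coordinate sum: a nonzero element
of `H` outside `β(H)` is a sum of two nonzero elements of `H`, each with smaller coordinate sum. -/

def coordComb {k : ℕ} {X : Finset (Fin k)} (c : X → ℚ) : (Fin k → ℕ) →+ ℚ where
  toFun f := ∑ i : X, c i * (f i : ℚ)
  map_zero' := by simp
  map_add' f g := by simp only [Pi.add_apply, Nat.cast_add, mul_add, Finset.sum_add_distrib]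

theorem indepOver_iff {k : ℕ} (X : Finset (Fin k)) (A : Set (Fin k → ℕ)) :
    IndepOver X A ↔ ∀ c : X → ℚ, (∀ f ∈ A, coordComb c f = 0) → ∀ i, c i = 0 := by
  unfold IndepOver coordFn
  simp only [Fintype.linearIndependent_iff, funext_iff, Finset.sum_apply, Pi.smul_apply,
    smul_eq_mul, Pi.zero_apply, Subtype.forall]
  rfl

theorem indepOver_closure_iff {k : ℕ} (X : Finset (Fin k)) (A : Set (Fin k → ℕ)) :
    IndepOver X (AddSubmonoid.closure A) ↔ IndepOver X A := by
  have vanish_closure (c : X → ℚ) :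
      (∀ f ∈ AddSubmonoid.closure A, coordComb c f = 0) ↔ ∀ f ∈ A, coordComb c f = 0 :=
    AddSubmonoid.closure_le (S := AddMonoidHom.mker (coordComb c))
  simp only [indepOver_iff, SetLike.mem_coe, vanish_closure]

theorem beta_subset {k : ℕ} (H : AddSubmonoid (Fin k → ℕ)) : beta H ⊆ H :=
  fun _ hf => hf.1.1

theorem sum_lt_sum_add_of_ne_zero {ι : Type*} [Fintype ι] (g : ι → ℕ) {h : ι → ℕ} (hh : h ≠ 0) :
    ∑ j, g j < ∑ j, (g + h) j := by
  have hpos : 0 < ∑ j, h j := Nat.pos_of_ne_zero fun h0 =>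
    hh (funext fun j => Finset.sum_eq_zero_iff.1 h0 j (Finset.mem_univ j))
  simp only [Pi.add_apply, Finset.sum_add_distrib]
  omega

open Pointwise in
theorem closure_beta {k : ℕ} (H : AddSubmonoid (Fin k → ℕ)) :
    AddSubmonoid.closure (beta H) = H := by
  refine le_antisymm (AddSubmonoid.closure_le.2 (beta_subset H)) fun f hf => ?_
  induction hn : ∑ j, f j using Nat.strong_induction_on generalizing f with
  | _ n ih =>
    by_cases hf0 : f = 0
    · exact hf0 ▸ zero_mem _
    by_cases hfβ : f ∈ beta H
    · exact AddSubmonoid.subset_closure hfβ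
    obtain ⟨g, ⟨hgH, hg0⟩, g', ⟨hg'H, hg'0⟩, rfl⟩ :
        f ∈ ((H : Set (Fin k → ℕ)) \ {0}) + ((H : Set (Fin k → ℕ)) \ {0}) :=
      not_not.1 fun hsplit => hfβ ⟨⟨hf, hf0⟩, hsplit⟩
    have hg_lt := sum_lt_sum_add_of_ne_zero g hg'0
    have hg'_lt := sum_lt_sum_add_of_ne_zero g' hg0
    rw [add_comm g'] at hg'_lt
    exact add_mem (ih _ (hn ▸ hg_lt) g hgH rfl) (ih _ (hn ▸ hg'_lt) g' hg'H rfl)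

theorem statement3_general {k : ℕ} (H : AddSubmonoid (Fin k → ℕ))
    (X : Finset (Fin k)) :
    IndepOver X (H : Set (Fin k → ℕ)) ↔ IndepOver X (beta H) := by
  conv_lhs => rw [← closure_beta H]
  exact indepOver_closure_iff X (beta H)

theorem statement3 {k : ℕ} (hk : 0 < k) (H : AddSubmonoid (Fin k → ℕ)) (hH : H ≠ ⊥)
    (X : Finset (Fin k)) (hX : X.Nonempty) :
    IndepOver X (H : Set (Fin k → ℕ)) ↔ IndepOver X (beta H) :=
  statement3_general H X
end

section
/- Let H be a submonoid of ℕ^k with H ≠ {0}, and let X ⊆ {1,…,k} be maximal independent over H. Then there exists a finitely generated submonoid F of ℕ^k with F ⊆ H such that X is maximal independent over F. -/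
lemma indep_of_subset {k : ℕ} {Y : Finset (Fin k)} {A B : Set (Fin k → ℕ)}
    (hAB : A ⊆ B) (h : IndepOver Y A) : IndepOver Y B := by
  apply LinearIndependent.of_comp (LinearMap.funLeft ℚ ℚ (Set.inclusion hAB))
  exact h

theorem statement6 {k : ℕ} (hk : 0 < k) (H : AddSubmonoid (Fin k → ℕ)) (hH : H ≠ ⊥)
    (X : Finset (Fin k)) (hX : X.Nonempty)
    (hmax : MaxIndepOver X (H : Set (Fin k → ℕ))) :
    ∃ F : AddSubmonoid (Fin k → ℕ), F.FG ∧ F ≤ H ∧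
      MaxIndepOver X (F : Set (Fin k → ℕ)) := by
  classical
  set A : Set (Fin k → ℕ) := (H : Set (Fin k → ℕ)) with hA
  let w : A → (↥X → ℚ) := fun a i => coordFn A i.1 a
  obtain ⟨b, hbsub, hspan, hbind⟩ := exists_linearIndependent ℚ (Set.range w)
  have hbfin : b.Finite := hbind.set_finite_of_isNoetherian
  have hpre : ∀ x ∈ b, ∃ a : A, w a = x := fun x hx => hbsub hx
  choose g hg using hpre
  haveI := hbfin.to_subtype
  let S : Set (Fin k → ℕ) := Set.range (fun x : b => ((g x.1 x.2 : A) : Fin k → ℕ))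
  have hSfin : S.Finite := Set.finite_range _
  let F : AddSubmonoid (Fin k → ℕ) := AddSubmonoid.closure S
  have hFH : F ≤ H := by
    apply AddSubmonoid.closure_le.mpr
    rintro _ ⟨x, rfl⟩
    exact (g x.1 x.2).2
  have hSF : S ⊆ (F : Set (Fin k → ℕ)) := AddSubmonoid.subset_closure
  refine ⟨F, (AddSubmonoid.fg_iff F).mpr ⟨S, rfl, hSfin⟩, hFH, ?_, ?_⟩
  · -- IndepOver X F
    rw [IndepOver, Fintype.linearIndependent_iff]
    intro c hc
    -- the dot-product functional
    let φ : (↥X → ℚ) →ₗ[ℚ] ℚ :=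
      { toFun := fun v => ∑ i, c i * v i
        map_add' := by intro u v; simp [mul_add, Finset.sum_add_distrib]
        map_smul' := by intro r v; simp [Finset.mul_sum, mul_left_comm] }
    have hker : Submodule.span ℚ (Set.range w) ≤ LinearMap.ker φ := by
      rw [← hspan]
      apply Submodule.span_le.mpr
      intro x hx
      have hmemF : ((g x hx : A) : Fin k → ℕ) ∈ F := hSF ⟨⟨x, hx⟩, rfl⟩
      have := congrFun hc ⟨((g x hx : A) : Fin k → ℕ), hmemF⟩
      simp only [Finset.sum_apply, Pi.smul_apply, smul_eq_mul, Pi.zero_apply] at this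
      have hx' : φ x = 0 := by
        rw [← hg x hx]
        simpa [φ, w, coordFn] using this
      simpa [LinearMap.mem_ker] using hx'
    have hrel : (∑ i, c i • coordFn A i.1) = (0 : A → ℚ) := by
      funext a
      have : φ (w a) = 0 := hker (Submodule.subset_span ⟨a, rfl⟩)
      simpa [φ, w, coordFn] using this
    exact Fintype.linearIndependent_iff.mp hmax.1 c hrel
  · intro Y hXY hY
    exact hmax.2 Y hXY (indep_of_subset hFH hY)
end

section
/- Let H be a submonoid of ℕ^k with H ≠ {0}, and let X ⊆ {1,…,k} be maximal independent over H. Then ind H = |X|; that is, H is isomorphic as an additive monoid to a submonoid of ℕ^{|X|}, and whenever H is isomorphic to a submonoid of ℕ^r with r ≥ 1, one has r ≥ |X|. -/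
/-!
Maximality of `X` makes every coordinate function on `H` a `ℚ`-linear combination of those
indexed by `X`, so projecting onto the coordinates in `X` embeds `H` into `ℕ^|X|`. Conversely,
independence of the coordinate functions in `X` yields `|X|` elements of `H` that are linearly
independent over `ℚ`. For vectors of naturals this is the same as independence over `ℕ`, which
is preserved by any additive embedding `H → ℕ^r`, so `|X| ≤ r`.
-/

open Module Submodule

section RatVec

variable {σ ι : Type*}

def ratVec (σ : Type*) : (σ → ℕ) →+ (σ → ℚ) := (Nat.castAddMonoidHom ℚ).compLeft σ

lemma ratVec_injective : Function.Injective (ratVec σ) :=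
  Nat.cast_injective.comp_left

lemma linearIndependent_ratVec_iff (v : ι → σ → ℕ) :
    LinearIndependent ℚ (ratVec σ ∘ v) ↔ LinearIndependent ℕ v := by
  refine ⟨fun h => .of_comp (ratVec σ).toNatLinearMap (h.restrict_scalars' ℕ), fun h => ?_⟩
  rw [← LinearIndependent.iff_fractionRing ℤ ℚ, linearIndependent_iff']
  intro s z hz i hi
  rw [linearIndependent_iff'ₛ] at h
  have hpos_neg : ∑ j ∈ s, (z j).toNat • v j = ∑ j ∈ s, (-z j).toNat • v j := by
    apply ratVec_injective
    rw [← sub_eq_zero, map_sum, map_sum, ← Finset.sum_sub_distrib, ← hz]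
    refine Finset.sum_congr rfl fun j _ => ?_
    conv_rhs => rw [← (z j).toNat_sub_toNat_neg]
    simp only [map_nsmul, Function.comp_apply, sub_smul, natCast_zsmul]
  rw [← (z i).toNat_sub_toNat_neg, sub_eq_zero, h s _ _ hpos_neg i hi]

lemma LinearIndependent.nat_map {M N : Type*} [AddCommMonoid M] [AddCommMonoid N]
    {v : ι → M} (hv : LinearIndependent ℕ v) {f : M →+ N} (hf : Function.Injective f) :
    LinearIndependent ℕ (f ∘ v) :=
  hv.map_of_injective_injectiveₛ id f Function.injective_id hf fun r m => map_nsmul f r m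

end RatVec

lemma exists_linearIndependent_fin_of_le_finrank_span {K V : Type*} [Field K] [AddCommGroup V]
    [Module K V] [FiniteDimensional K V] {s : Set V} {n : ℕ} (hn : n ≤ finrank K (span K s)) :
    ∃ v : Fin n → V, (∀ m, v m ∈ s) ∧ LinearIndependent K v := by
  obtain ⟨b, hbs, hspan, hli⟩ := exists_linearIndependent K s
  have : Fintype b := hli.setFinite.fintype
  rw [← hspan, finrank_span_set_eq_card hli, Set.toFinset_card] at hn
  let e : Fin n ↪ b := (Fin.castLEEmb hn).trans (Fintype.equivFin b).symm.toEmbedding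
  exact ⟨fun m => e m, fun m => hbs (e m).2, hli.comp e e.injective⟩

section Coordinates

variable {k : ℕ} {X : Finset (Fin k)} {A : Set (Fin k → ℕ)}

lemma indepOver_iff_linearIndepOn :
    IndepOver X A ↔ LinearIndepOn ℚ (coordFn A) (X : Set (Fin k)) :=
  Iff.rfl

-- Restricted to `A`, the coordinate forms on `span ℚ (ratVec '' A)` are the `coordFn A i`.
lemma IndepOver.card_le_finrank_span (hX : IndepOver X A) :
    X.card ≤ finrank ℚ (span ℚ (ratVec (Fin k) '' A)) := by
  set W := span ℚ (ratVec (Fin k) '' A)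
  let restrictToA : Dual ℚ W →ₗ[ℚ] A → ℚ :=
    LinearMap.pi fun a => LinearMap.applyₗ ⟨ratVec (Fin k) a, subset_span ⟨a, a.2, rfl⟩⟩
  have hli : LinearIndependent ℚ fun i : X => (LinearMap.proj (R := ℚ) i.1).comp W.subtype :=
    .of_comp restrictToA hX
  simpa [Subspace.dual_finrank_eq] using hli.fintype_card_le_finrank

lemma IndepOver.exists_linearIndependent (hX : IndepOver X A) :
    ∃ v : Fin X.card → Fin k → ℕ, (∀ m, v m ∈ A) ∧ LinearIndependent ℚ (ratVec (Fin k) ∘ v) := by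
  obtain ⟨w, hwA, hw⟩ := exists_linearIndependent_fin_of_le_finrank_span hX.card_le_finrank_span
  choose v hvA hv using hwA
  exact ⟨v, hvA, by rwa [show ratVec (Fin k) ∘ v = w from funext hv]⟩

lemma MaxIndepOver.coordFn_mem_span (hmax : MaxIndepOver X A) (j : Fin k) :
    coordFn A j ∈ span ℚ (coordFn A '' X) := by
  by_cases hj : j ∈ X
  · exact subset_span ⟨j, hj, rfl⟩
  have hdep := hmax.2 (insert j X) (Finset.ssubset_insert hj)
  rw [indepOver_iff_linearIndepOn, Finset.coe_insert,
    linearIndepOn_insert (by simpa using hj), not_and_not_right] at hdep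
  exact hdep hmax.1

lemma MaxIndepOver.eq_of_forall_mem_eq (hmax : MaxIndepOver X A) {a b : Fin k → ℕ}
    (ha : a ∈ A) (hb : b ∈ A) (hab : ∀ i ∈ X, a i = b i) : a = b := by
  let difference : (A → ℚ) →ₗ[ℚ] ℚ := LinearMap.proj ⟨a, ha⟩ - LinearMap.proj ⟨b, hb⟩
  have hspan : span ℚ (coordFn A '' X) ≤ LinearMap.ker difference := by
    rw [span_le]
    rintro _ ⟨i, hi, rfl⟩
    simp [difference, coordFn, hab i hi]
  funext j
  have := hspan (hmax.coordFn_mem_span j)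
  simpa [difference, coordFn, sub_eq_zero] using this

end Coordinates

lemma restrictHom_eq_iff {k : ℕ} {X : Finset (Fin k)} {a b : Fin k → ℕ} :
    restrictHom X a = restrictHom X b ↔ ∀ i ∈ X, a i = b i := by
  refine ⟨fun h i hi => ?_, fun h => funext fun m => h _ (X.orderIsoOfFin rfl m).2⟩
  let e := X.orderIsoOfFin rfl
  have hi' : a (e (e.symm ⟨i, hi⟩)).1 = b (e (e.symm ⟨i, hi⟩)).1 := congrFun h (e.symm ⟨i, hi⟩)
  rwa [OrderIso.apply_symm_apply] at hi'

section IsoToSub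

variable {k r : ℕ} {H : AddSubmonoid (Fin k → ℕ)}

lemma isoToSub_of_injective {f : H →+ (Fin r → ℕ)} (hf : Function.Injective f) :
    IsoToSub H r :=
  ⟨AddMonoidHom.mrange f, ⟨AddEquiv.ofBijective f.mrangeRestrict
    ⟨fun _ _ h => hf (congrArg Subtype.val h), f.mrangeRestrict_surjective⟩⟩⟩

lemma MaxIndepOver.isoToSub {X : Finset (Fin k)} (hmax : MaxIndepOver X (H : Set (Fin k → ℕ))) :
    IsoToSub H X.card :=
  isoToSub_of_injective (f := (restrictHom X).comp H.subtype) fun a b hab =>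
    Subtype.ext <| hmax.eq_of_forall_mem_eq a.2 b.2 (restrictHom_eq_iff.mp hab)

lemma IndepOver.card_le_of_isoToSub {X : Finset (Fin k)} (hX : IndepOver X (H : Set (Fin k → ℕ)))
    (hr : IsoToSub H r) : X.card ≤ r := by
  obtain ⟨K, ⟨φ⟩⟩ := hr
  obtain ⟨v, hvH, hv⟩ := hX.exists_linearIndependent
  let w : Fin X.card → H := fun m => ⟨v m, hvH m⟩
  have hw : LinearIndependent ℕ w :=
    .of_comp H.subtype.toNatLinearMap ((linearIndependent_ratVec_iff v).mp hv)
  have hφw : LinearIndependent ℚ (ratVec (Fin r) ∘ K.subtype ∘ φ ∘ w) := by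
    rw [linearIndependent_ratVec_iff]
    exact hw.nat_map (f := K.subtype.comp φ.toAddMonoidHom)
      (Subtype.val_injective.comp φ.injective)
  simpa using hφw.fintype_card_le_finrank

end IsoToSub

theorem statement7_general {k : ℕ} (H : AddSubmonoid (Fin k → ℕ))
    (X : Finset (Fin k)) (hX : X.Nonempty)
    (hmax : MaxIndepOver X (H : Set (Fin k → ℕ))) :
    indOf H = X.card ∧ IsoToSub H X.card ∧
      ∀ r : ℕ, 1 ≤ r → IsoToSub H r → X.card ≤ r := by
  have hlower : ∀ r : ℕ, 1 ≤ r → IsoToSub H r → X.card ≤ r :=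
    fun _ _ => hmax.1.card_le_of_isoToSub
  have hmem : X.card ∈ {r : ℕ | 1 ≤ r ∧ IsoToSub H r} := ⟨hX.card_pos, hmax.isoToSub⟩
  obtain ⟨hind_pos, hind_iso⟩ := Nat.sInf_mem ⟨_, hmem⟩
  exact ⟨le_antisymm (Nat.sInf_le hmem) (hlower _ hind_pos hind_iso), hmax.isoToSub, hlower⟩

theorem statement7 {k : ℕ} (hk : 0 < k) (H : AddSubmonoid (Fin k → ℕ)) (hH : H ≠ ⊥)
    (X : Finset (Fin k)) (hX : X.Nonempty)
    (hmax : MaxIndepOver X (H : Set (Fin k → ℕ))) :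
    indOf H = X.card ∧ IsoToSub H X.card ∧
      ∀ r : ℕ, 1 ≤ r → IsoToSub H r → X.card ≤ r :=
  statement7_general H X hX hmax
end

section
/- Let H be a submonoid of ℕ^k with H ≠ {0}, and let X ⊆ {1,…,k} be independent over H. Then ind (H|X) = |X|; that is, whenever the |X|-monoid H|X is isomorphic as an additive monoid to a submonoid of ℕ^r with r ≥ 1, one has r ≥ |X|. -/
/-! The coordinate functions of `H|X` being ℚ-independent means that `H|X` spans `ℚ^|X|`, so it
contains `|X|` elements that are ℚ-linearly independent. For vectors over ℚ this is the same as
ℕ-linear independence (split an integral relation into its positive and negative parts), a purely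
additive notion, so a monoid isomorphism carries these elements to `|X|` independent elements of a
submonoid of `ℕ^r ⊆ ℚ^r`, which forces `|X| ≤ r`. -/

theorem LinearIndependent.int_of_nat {ι V : Type*} [AddCommGroup V] {v : ι → V}
    (hv : LinearIndependent ℕ v) : LinearIndependent ℤ v := by
  rw [linearIndependent_iff']
  intro s g hg i hi
  have hsplit : ∑ i ∈ s, (g i).toNat • v i = ∑ i ∈ s, (-g i).toNat • v i := by
    rw [← sub_eq_zero, ← Finset.sum_sub_distrib, ← hg]
    refine Finset.sum_congr rfl fun j _ => ?_
    rw [← natCast_zsmul, ← natCast_zsmul, ← sub_smul, Int.toNat_sub_toNat_neg]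
  have := linearIndependent_iff'ₛ.mp hv s _ _ hsplit i hi
  omega

theorem linearIndependent_nat_iff_rat {ι V : Type*} [AddCommGroup V] [Module ℚ V] {v : ι → V} :
    LinearIndependent ℕ v ↔ LinearIndependent ℚ v :=
  ⟨fun hv => (LinearIndependent.iff_fractionRing ℤ ℚ).mp hv.int_of_nat,
    LinearIndependent.restrict_scalars' ℕ⟩

theorem span_range_eq_top_of_linearIndependent_coord {K ι S : Type*} [Field K] [Fintype ι]
    [DecidableEq ι] (w : S → ι → K) (hw : LinearIndependent K fun i s => w s i) :
    Submodule.span K (Set.range w) = ⊤ := by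
  rw [← Submodule.dualAnnihilator_eq_bot_iff, Submodule.eq_bot_iff]
  intro f hf
  rw [Submodule.mem_dualAnnihilator] at hf
  have hf_apply (x : ι → K) : f x = ∑ i, x i * f (Pi.single i 1) := by
    conv_lhs => rw [← Finset.univ_sum_single x]
    simp_rw [map_sum, ← smul_eq_mul, ← map_smul, ← Pi.single_smul', smul_eq_mul, mul_one]
  have hvanish : ∑ i, f (Pi.single i 1) • (fun s => w s i) = 0 := by
    funext s
    have := hf (w s) (Submodule.subset_span ⟨s, rfl⟩)
    rw [hf_apply] at this
    simpa [mul_comm] using this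
  have hzero := Fintype.linearIndependent_iff.mp hw _ hvanish
  exact LinearMap.ext fun x => by simp [hf_apply x, hzero]

namespace AddSubmonoid

variable {n r : ℕ}

def castRat (M : AddSubmonoid (Fin n → ℕ)) : M →ₗ[ℕ] (Fin n → ℚ) :=
  (Algebra.linearMap ℕ ℚ).compLeft (Fin n) ∘ₗ M.subtype.toNatLinearMap

theorem castRat_injective (M : AddSubmonoid (Fin n → ℕ)) : Function.Injective M.castRat :=
  (Nat.cast_injective.comp_left).comp Subtype.val_injective

theorem card_le_of_linearIndependent_nat (K : AddSubmonoid (Fin r → ℕ)) {ι : Type*} [Fintype ι]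
    {v : ι → K} (hv : LinearIndependent ℕ v) : Fintype.card ι ≤ r := by
  have := linearIndependent_nat_iff_rat.mp (hv.map_injOn K.castRat K.castRat_injective.injOn)
  simpa using this.fintype_card_le_finrank

theorem exists_linearIndependent_nat (M : AddSubmonoid (Fin n → ℕ))
    (hM : LinearIndependent ℚ (coordFn (M : Set (Fin n → ℕ)))) :
    ∃ v : Fin n → M, LinearIndependent ℕ v := by
  have hspan := span_range_eq_top_of_linearIndependent_coord M.castRat hM
  obtain ⟨κ, a, -, hspan_a, hli⟩ := exists_linearIndependent' ℚ M.castRat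
  let B : Module.Basis κ ℚ (Fin n → ℚ) := .mk hli (by rw [hspan_a, hspan])
  let σ := B.indexEquiv (Pi.basisFun ℚ (Fin n))
  refine ⟨a ∘ σ.symm, LinearIndependent.of_comp M.castRat ?_⟩
  exact linearIndependent_nat_iff_rat.mpr (hli.comp σ.symm σ.symm.injective)

theorem le_of_addEquiv (M : AddSubmonoid (Fin n → ℕ))
    (hM : LinearIndependent ℚ (coordFn (M : Set (Fin n → ℕ))))
    (K : AddSubmonoid (Fin r → ℕ)) (φ : M ≃+ K) : n ≤ r := by
  obtain ⟨v, hv⟩ := M.exists_linearIndependent_nat hM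
  simpa using K.card_le_of_linearIndependent_nat
    (hv.map_injOn φ.toNatLinearEquiv.toLinearMap φ.injective.injOn)

end AddSubmonoid

theorem linearIndependent_coordFn_map_restrictHom {k : ℕ} {H : AddSubmonoid (Fin k → ℕ)}
    {X : Finset (Fin k)} (hind : IndepOver X (H : Set (Fin k → ℕ))) :
    LinearIndependent ℚ (coordFn (H.map (restrictHom X) : Set (Fin X.card → ℕ))) := by
  let π : H → H.map (restrictHom X) := fun h => ⟨restrictHom X h, H.mem_map_of_mem _ h.2⟩
  exact .of_comp (LinearMap.funLeft ℚ ℚ π)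
    (hind.comp (X.orderIsoOfFin rfl) (X.orderIsoOfFin rfl).injective)

theorem statement10_general {k : ℕ} (H : AddSubmonoid (Fin k → ℕ))
    (X : Finset (Fin k)) (hX : X.Nonempty)
    (hind : IndepOver X (H : Set (Fin k → ℕ))) :
    indOf (AddSubmonoid.map (restrictHom X) H) = X.card := by
  set M := H.map (restrictHom X)
  have hself : X.card ∈ {r : ℕ | 1 ≤ r ∧ IsoToSub M r} := ⟨hX.card_pos, M, ⟨AddEquiv.refl M⟩⟩
  refine le_antisymm (Nat.sInf_le hself) (le_csInf ⟨X.card, hself⟩ ?_)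
  rintro r ⟨-, K, ⟨φ⟩⟩
  exact M.le_of_addEquiv (linearIndependent_coordFn_map_restrictHom hind) K φ

theorem statement10 {k : ℕ} (hk : 0 < k) (H : AddSubmonoid (Fin k → ℕ)) (hH : H ≠ ⊥)
    (X : Finset (Fin k)) (hX : X.Nonempty)
    (hind : IndepOver X (H : Set (Fin k → ℕ))) :
    indOf (AddSubmonoid.map (restrictHom X) H) = X.card :=
  statement10_general H X hX hind
end

section
/- A submonoid H of ℕ^k has index 1, i.e., H is isomorphic as an additive monoid to a submonoid of ℕ, if and only if there exists f ∈ ℕ^k such that H ⊆ ⟨f⟩. -/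
set_option synthInstance.maxHeartbeats 400000 in
theorem key' {k : ℕ} {H : AddSubmonoid (Fin k → ℕ)} {K : AddSubmonoid ℕ}
    (e : H ≃+ K) (a b : H) :
    ((e b : ℕ)) • (a : Fin k → ℕ) = ((e a : ℕ)) • (b : Fin k → ℕ) := by
  have h : ((e b : ℕ)) • a = ((e a : ℕ)) • b := by
    apply e.injective
    apply Subtype.ext
    rw [map_nsmul, map_nsmul]
    push_cast
    rw [smul_eq_mul, smul_eq_mul, mul_comm]
  exact congrArg Subtype.val h

set_option synthInstance.maxHeartbeats 400000 in
set_option maxHeartbeats 1000000 in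
theorem statement13 {k : ℕ} (hk : 0 < k) (H : AddSubmonoid (Fin k → ℕ)) :
    (∃ K : AddSubmonoid ℕ, Nonempty (H ≃+ K)) ↔
      ∃ f : Fin k → ℕ, H ≤ AddSubmonoid.closure {f} := by
  constructor
  · rintro ⟨K, ⟨e⟩⟩
    by_cases hH : ∀ x ∈ H, x = (0 : Fin k → ℕ)
    · refine ⟨0, fun x hx => ?_⟩
      rw [hH x hx]
      exact (AddSubmonoid.closure {0}).zero_mem
    · push_neg at hH
      obtain ⟨a, haH, ha'⟩ := hH
      set A : H := ⟨a, haH⟩ with hA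
      have hea : (e A : ℕ) ≠ 0 := by
        intro h0
        have h1 : e (A + A) = e A := by
          apply Subtype.ext
          rw [map_add]
          push_cast
          rw [h0]
        have h2 : A + A = A := e.injective h1
        have h3 : a + a = a := congrArg Subtype.val h2
        apply ha'
        funext j
        have := congrFun h3 j
        simp only [Pi.add_apply] at this
        simp only [Pi.zero_apply]
        omega
      obtain ⟨i, hi⟩ : ∃ i, a i ≠ 0 := Function.ne_iff.mp ha'
      set d : ℕ := Finset.univ.gcd a with hd
      have hdvd : ∀ j, d ∣ a j := fun j => Finset.gcd_dvd (Finset.mem_univ j)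
      have hdpos : d ≠ 0 := fun h => hi (zero_dvd_iff.mp (h ▸ hdvd i))
      set f : Fin k → ℕ := fun j => a j / d with hf
      have haf : ∀ j, a j = d * f j := fun j => (Nat.mul_div_cancel' (hdvd j)).symm
      have hgcd1 : Finset.univ.gcd f = 1 :=
        Finset.gcd_div_eq_one (Finset.mem_univ i) hi
      refine ⟨f, fun b hb => ?_⟩
      rw [AddSubmonoid.mem_closure_singleton]
      set B : H := ⟨b, hb⟩ with hB
      set m : ℕ := (e B : ℕ) with hm
      set M : ℕ := (e A : ℕ) with hM
      have hkey : ∀ j, M * b j = m * a j := by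
        intro j
        have := congrFun (key' e A B) j
        simpa [Pi.smul_apply, smul_eq_mul, mul_comm] using this.symm
      have hMdvd : M ∣ m * d := by
        have h1 : M ∣ Finset.univ.gcd (fun j => m * d * f j) := by
          apply Finset.dvd_gcd
          intro j _
          exact ⟨b j, by rw [hkey j, haf j]; ring⟩
        rwa [Finset.gcd_mul_left, hgcd1, normalize_eq, mul_one] at h1
      refine ⟨m * d / M, ?_⟩
      funext j
      have hM0 : 0 < M := Nat.pos_of_ne_zero hea
      apply Nat.eq_of_mul_eq_mul_left hM0
      calc M * ((m * d / M) • f) j = M * (m * d / M) * f j := by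
            simp [Pi.smul_apply, smul_eq_mul, mul_assoc]
        _ = m * d * f j := by rw [Nat.mul_div_cancel' hMdvd]
        _ = m * a j := by rw [haf j]; ring
        _ = M * b j := (hkey j).symm
  · rintro ⟨f, hle⟩
    by_cases hf : f = 0
    · subst hf
      rw [AddSubmonoid.closure_singleton_zero] at hle
      have hH0 : ∀ x : H, (x : Fin k → ℕ) = 0 := fun x =>
        AddSubmonoid.mem_bot.mp (hle x.2)
      refine ⟨⊥, ⟨{ toFun := fun _ => 0
                    invFun := fun _ => ⟨0, H.zero_mem⟩
                    left_inv := fun x => Subtype.ext (hH0 x).symm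
                    right_inv := fun y => Subtype.ext
                      (by simpa using (AddSubmonoid.mem_bot.mp y.2).symm)
                    map_add' := fun _ _ => by simp }⟩⟩
    · obtain ⟨i, hi⟩ : ∃ i, f i ≠ 0 := Function.ne_iff.mp hf
      set φ : H →+ ℕ := (Pi.evalAddMonoidHom (fun _ => ℕ) i).comp H.subtype with hφ
      have hinj : Function.Injective φ := by
        intro x y h
        obtain ⟨n, hn⟩ := AddSubmonoid.mem_closure_singleton.mp (hle x.2)
        obtain ⟨m, hm⟩ := AddSubmonoid.mem_closure_singleton.mp (hle y.2)
        have hx : φ x = n * f i := by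
          simp [hφ, Pi.evalAddMonoidHom, ← hn, smul_eq_mul]
        have hy : φ y = m * f i := by
          simp [hφ, Pi.evalAddMonoidHom, ← hm, smul_eq_mul]
        have hnm : n = m := by
          rw [hx, hy] at h
          exact Nat.eq_of_mul_eq_mul_right (Nat.pos_of_ne_zero hi) h
        apply Subtype.ext
        rw [← hn, ← hm, hnm]
      exact ⟨AddMonoidHom.mrange φ, ⟨AddEquiv.ofBijective φ.mrangeRestrict
        ⟨fun x y h => hinj (congrArg Subtype.val h),
         AddMonoidHom.mrangeRestrict_surjective φ⟩⟩⟩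
end

section
/- Let H be the submonoid of ℕ^k generated by nonzero elements h_1, h_2, …, h_r. Then H is isomorphic as an additive monoid to a submonoid of ℕ (i.e., ind H = 1) if and only if h_1, h_2, …, h_r all have the same primitive part. -/
set_option synthInstance.maxHeartbeats 400000
set_option maxHeartbeats 1000000

theorem statement14 {k r : ℕ} (hk : 0 < k) (hr : 0 < r)
    (h : Fin r → (Fin k → ℕ)) (hnz : ∀ j, h j ≠ 0) :
    (∃ K : AddSubmonoid ℕ,
        Nonempty (AddSubmonoid.closure (Set.range h) ≃+ K)) ↔
      ∃ g : Fin k → ℕ, Finset.univ.gcd g = 1 ∧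
        ∀ j, ∃ c : ℕ, 0 < c ∧ h j = c • g := by
  set H := AddSubmonoid.closure (Set.range h) with hH
  have hmem : ∀ j, h j ∈ H := fun j =>
    AddSubmonoid.subset_closure (Set.mem_range_self j)
  constructor
  · rintro ⟨K, ⟨φ⟩⟩
    -- a j : value of φ at h j
    set a : Fin r → ℕ := fun j => (φ ⟨h j, hmem j⟩ : ℕ) with ha
    have hainj : Function.Injective φ := φ.injective
    have hapos : ∀ j, 0 < a j := by
      intro j
      rcases Nat.eq_zero_or_pos (a j) with h0 | h0
      · exfalso
        have : φ ⟨h j, hmem j⟩ = 0 := by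
          ext; simpa [ha] using h0
        have := hainj (by rw [this, map_zero] : φ ⟨h j, hmem j⟩ = φ 0)
        exact hnz j (congrArg Subtype.val this)
      · exact h0
    -- key commutation
    have key : ∀ i j, a j • h i = a i • h j := by
      intro i j
      have : φ (a j • ⟨h i, hmem i⟩) = φ (a i • ⟨h j, hmem j⟩) := by
        rw [map_nsmul, map_nsmul]
        ext
        push_cast [AddSubmonoidClass.coe_nsmul]
        simp only [smul_eq_mul]
        ring
      have := hainj this
      have := congrArg Subtype.val this
      simpa [AddSubmonoidClass.coe_nsmul] using this
    set j₀ : Fin r := ⟨0, hr⟩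
    set d : ℕ := Finset.univ.gcd (h j₀) with hd
    have hdpos : 0 < d := by
      rcases Nat.eq_zero_or_pos d with h0 | h0
      · exfalso
        apply hnz j₀
        funext i
        exact Finset.gcd_eq_zero_iff.1 h0 i (Finset.mem_univ i)
      · exact h0
    obtain ⟨i₀, hi₀⟩ : ∃ i, h j₀ i ≠ 0 := by
      by_contra hc
      push_neg at hc
      exact hnz j₀ (funext hc)
    refine ⟨fun i => h j₀ i / d, ?_, ?_⟩
    · exact Finset.gcd_div_eq_one (Finset.mem_univ i₀) hi₀
    · intro j
      set g : Fin k → ℕ := fun i => h j₀ i / d with hg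
      have hgd : ∀ i, d * g i = h j₀ i := fun i =>
        Nat.mul_div_cancel' (Finset.gcd_dvd (Finset.mem_univ i)) 
      have hkey : ∀ i, a j₀ * h j i = (a j * d) * g i := by
        intro i
        have := congrFun (key j j₀) i
        simp only [Pi.smul_apply, smul_eq_mul] at this
        rw [this, mul_assoc, hgd]
      have hdvd : a j₀ ∣ a j * d := by
        have h1 : a j₀ ∣ Finset.univ.gcd (fun i => (a j * d) * g i) :=
          Finset.dvd_gcd (fun i _ => ⟨h j i, (hkey i).symm⟩)
        have h2 : Finset.univ.gcd (fun i => (a j * d) * g i) = (a j * d) * Finset.univ.gcd g := by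
          rw [Finset.gcd_mul_left]; simp
        have h3 : Finset.univ.gcd g = 1 :=
          Finset.gcd_div_eq_one (Finset.mem_univ i₀) hi₀
        rwa [h2, h3, mul_one] at h1
      obtain ⟨c, hc⟩ := hdvd
      refine ⟨c, ?_, ?_⟩
      · rcases Nat.eq_zero_or_pos c with h0 | h0
        · exfalso
          rw [h0, mul_zero] at hc
          exact (Nat.mul_pos (hapos j) hdpos).ne' hc
        · exact h0
      · funext i
        have := hkey i
        rw [hc, mul_assoc] at this
        have := Nat.eq_of_mul_eq_mul_left (hapos j₀) this
        simpa [Pi.smul_apply, smul_eq_mul] using this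
  · rintro ⟨g, hgcd, hc⟩
    -- every element of H is a multiple of g
    have hgne : g ≠ 0 := by
      intro h0
      rw [h0] at hgcd
      have : Finset.univ.gcd (0 : Fin k → ℕ) = 0 :=
        Finset.gcd_eq_zero_iff.2 (fun i _ => rfl)
      omega
    obtain ⟨i₀, hi₀⟩ : ∃ i, g i ≠ 0 := by
      by_contra hcon; push_neg at hcon; exact hgne (funext hcon)
    set S : ℕ := ∑ i, g i with hS
    have hSpos : 0 < S := by
      have : 0 < g i₀ := Nat.pos_of_ne_zero hi₀
      exact lt_of_lt_of_le this (Finset.single_le_sum (fun i _ => Nat.zero_le _) (Finset.mem_univ i₀))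
    set M : AddSubmonoid (Fin k → ℕ) :=
      { carrier := Set.range (fun n : ℕ => n • g)
        zero_mem' := ⟨0, by simp⟩
        add_mem' := by
          rintro _ _ ⟨n, rfl⟩ ⟨m, rfl⟩
          exact ⟨n + m, (add_nsmul g n m)⟩ } with hM
    have hHM : H ≤ M := by
      rw [hH]
      apply AddSubmonoid.closure_le.2
      rintro _ ⟨j, rfl⟩
      obtain ⟨c, _, hcj⟩ := hc j
      exact ⟨c, hcj.symm⟩
    set ψ : (Fin k → ℕ) →+ ℕ :=
      { toFun := fun x => ∑ i, x i
        map_zero' := by simp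
        map_add' := fun x y => by simp [Finset.sum_add_distrib] } with hψ
    have hψg : ∀ n : ℕ, ψ (n • g) = n * S := by
      intro n
      simp [hψ, hS, Finset.mul_sum]
    set f : H →+ ℕ := ψ.comp H.subtype with hf
    have hfinj : Function.Injective f := by
      rintro ⟨x, hx⟩ ⟨y, hy⟩ hxy
      obtain ⟨n, rfl⟩ := hHM hx
      obtain ⟨m, rfl⟩ := hHM hy
      have : ψ (n • g) = ψ (m • g) := hxy
      rw [hψg, hψg] at this
      have : n = m := Nat.eq_of_mul_eq_mul_right hSpos this
      subst this; rfl
    refine ⟨AddMonoidHom.mrange f, ⟨AddEquiv.ofBijective f.mrangeRestrict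
      ⟨?_, f.mrangeRestrict_surjective⟩⟩⟩
    intro x y hxy
    apply hfinj
    have := congrArg Subtype.val hxy
    simpa using this
end

section
/- Let H and K be numerical semigroups. Then every isomorphism φ : H → K (a bijective map with φ(a+b) = φ(a)+φ(b)) is a strictly increasing function, and any two isomorphisms φ, ψ : H → K are equal. -/
theorem statement16 (H K : AddSubmonoid ℕ)
    (hH : ((H : Set ℕ)ᶜ).Finite) (hK : ((K : Set ℕ)ᶜ).Finite) :
    (∀ φ : H ≃+ K, StrictMono φ) ∧ ∀ φ ψ : H ≃+ K, φ = ψ := by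
  -- all sufficiently large numbers are in H
  obtain ⟨N, hN⟩ : ∃ N, ∀ m, N ≤ m → m ∈ H := by
    obtain ⟨N, hNub⟩ := hH.bddAbove
    refine ⟨N + 1, fun m hm => ?_⟩
    by_contra h
    have := hNub h
    omega
  have key : ∀ (φ : H ≃+ K) (a b : H), (b : ℕ) * ((φ a : K) : ℕ) = (a : ℕ) * ((φ b : K) : ℕ) := by
    intro φ a b
    have h1 : (b : ℕ) • a = (a : ℕ) • b := Subtype.ext (by
      push_cast [smul_eq_mul]
      ring)
    have e1 : φ ((b : ℕ) • a) = (b : ℕ) • φ a := map_nsmul φ.toAddMonoidHom _ _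
    have e2 : φ ((a : ℕ) • b) = (a : ℕ) • φ b := map_nsmul φ.toAddMonoidHom _ _
    have h2 : (b : ℕ) • φ a = (a : ℕ) • φ b := by rw [← e1, ← e2, h1]
    have h3 := congrArg Subtype.val h2
    simpa [smul_eq_mul] using h3
  have eq1 : ∀ (φ : H ≃+ K) (a : H), ((φ a : K) : ℕ) = (a : ℕ) := by
    intro φ a
    set n := N + 1 with hn_def
    have hn : n ∈ H := hN n (by omega)
    have hn1 : n + 1 ∈ H := hN (n + 1) (by omega)
    set a0 : H := ⟨n, hn⟩ with ha0
    set a1 : H := ⟨n + 1, hn1⟩ with ha1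
    have hA := key φ a0 a1
    -- (n+1) * φ a0 = n * φ a1
    have hcop : Nat.Coprime n (n + 1) := by simp
    have hdvd : n ∣ ((φ a0 : K) : ℕ) := by
      have : n ∣ ((φ a0 : K) : ℕ) * (n + 1) := ⟨((φ a1 : K) : ℕ), by
        rw [mul_comm ((φ a0 : K) : ℕ) (n+1)]; exact hA⟩
      exact (Nat.Coprime.dvd_of_dvd_mul_right hcop this)
    obtain ⟨c, hc⟩ := hdvd
    have hall : ∀ b : H, ((φ b : K) : ℕ) = (b : ℕ) * c := by
      intro b
      have hB := key φ b a0
      rw [hc] at hB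
      have hnpos : 0 < n := by omega
      have : n * ((φ b : K) : ℕ) = n * ((b : ℕ) * c) := by ring_nf; ring_nf at hB; linarith
      exact Nat.eq_of_mul_eq_mul_left hnpos this
    -- now show c = 1
    have hc1 : c = 1 := by
      rcases Nat.lt_or_ge c 1 with h | h
      · -- c = 0: φ a0 = 0 contradicts injectivity
        interval_cases c
        have h0 : ((φ a0 : K) : ℕ) = 0 := by rw [hc]; ring
        have : φ a0 = 0 := Subtype.ext h0
        have : a0 = 0 := by
          have := φ.injective (this.trans (map_zero φ).symm)
          exact this
        have : (a0 : ℕ) = 0 := congrArg Subtype.val this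
        simp [ha0] at this
      rcases Nat.lt_or_ge c 2 with h2 | h2
      · omega
      · -- c ≥ 2: every element of K is divisible by c, so Kᶜ is infinite
        exfalso
        have hKdvd : ∀ k ∈ K, c ∣ k := by
          intro k hk
          have : ((φ (φ.symm ⟨k, hk⟩) : K) : ℕ) = ((φ.symm ⟨k, hk⟩ : H) : ℕ) * c :=
            hall _
          rw [φ.apply_symm_apply] at this
          exact ⟨_, by simpa [mul_comm] using this⟩
        have hsub : Set.range (fun j : ℕ => j * c + 1) ⊆ ((K : Set ℕ)ᶜ) := by
          rintro m ⟨j, rfl⟩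
          intro hm
          have h1 := hKdvd _ hm
          have h2 : c ∣ j * c := dvd_mul_left c j
          have h3 : c ∣ 1 := by
            have := Nat.dvd_sub h1 h2
            simpa using this
          have := Nat.dvd_one.mp h3
          omega
        have hinf : (Set.range (fun j : ℕ => j * c + 1)).Infinite := by
          apply Set.infinite_range_of_injective
          intro x y hxy
          simp only at hxy
          have hx : x * c = y * c := by omega
          exact Nat.eq_of_mul_eq_mul_right (by omega) hx
        exact hinf (hK.subset hsub)
    rw [hall a, hc1, mul_one]
  constructor
  · intro φ a b hab
    have : (a : ℕ) < (b : ℕ) := hab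
    show φ a < φ b
    have h1 := eq1 φ a
    have h2 := eq1 φ b
    change ((φ a : K) : ℕ) < ((φ b : K) : ℕ)
    omega
  · intro φ ψ
    apply DFunLike.ext
    intro a
    exact Subtype.ext ((eq1 φ a).trans (eq1 ψ a).symm)
end

section
/- Let H be the numerical semigroup generated by h_1, h_2, …, h_r ∈ ℕ. Then a submonoid F of ℕ^k is isomorphic, as an additive monoid, to H if and only if there exists f ∈ ℕ^k \ {0} such that F is the submonoid of ℕ^k generated by h_1·f, h_2·f, …, h_r·f. -/
private def smulHom {k : ℕ} (f : Fin k → ℕ) : ℕ →+ (Fin k → ℕ) where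
  toFun n := n • f
  map_zero' := zero_smul ℕ f
  map_add' a b := add_smul a b f

private lemma smulHom_inj {k : ℕ} {f : Fin k → ℕ} (hf : f ≠ 0) :
    Function.Injective (smulHom f) := by
  intro a b hab
  obtain ⟨i, hi⟩ : ∃ i, f i ≠ 0 := by
    by_contra hc
    push_neg at hc
    exact hf (funext hc)
  have := congrFun hab i
  simp only [smulHom, AddMonoidHom.coe_mk, ZeroHom.coe_mk, Pi.smul_apply,
    smul_eq_mul] at this
  exact Nat.eq_of_mul_eq_mul_right (Nat.pos_of_ne_zero hi) this

private lemma closure_smul_eq {k r : ℕ} (h : Fin r → ℕ) (f : Fin k → ℕ) :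
    AddSubmonoid.closure (Set.range fun j => h j • f)
      = AddSubmonoid.map (smulHom f) (AddSubmonoid.closure (Set.range h)) := by
  rw [AddMonoidHom.map_mclosure]
  congr 1
  rw [← Set.range_comp]
  rfl

theorem statement19 {k r : ℕ} (hk : 0 < k) (h : Fin r → ℕ)
    (hns : ((AddSubmonoid.closure (Set.range h) : Set ℕ)ᶜ).Finite)
    (F : AddSubmonoid (Fin k → ℕ)) :
    Nonempty (F ≃+ AddSubmonoid.closure (Set.range h)) ↔
      ∃ f : Fin k → ℕ, f ≠ 0 ∧
        F = AddSubmonoid.closure (Set.range fun j => h j • f) := by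
  set H := AddSubmonoid.closure (Set.range h) with hH
  constructor
  · rintro ⟨e⟩
    -- get n with n, n+1 ∈ H and n > 0
    obtain ⟨c, hc⟩ := hns.bddAbove
    have hmem : ∀ m : ℕ, c < m → m ∈ H := by
      intro m hm
      by_contra hmH
      exact absurd (hc hmH) (not_le.mpr hm)
    set n := c + 1 with hn
    have hnpos : 0 < n := Nat.succ_pos c
    have hnH : n ∈ H := hmem n (Nat.lt_succ_self c)
    have hn1H : n + 1 ∈ H := hmem (n + 1) (by omega)
    -- ψ : H →+ ℕ^k
    set ψ : H →+ (Fin k → ℕ) := F.subtype.comp e.symm.toAddMonoidHom with hψ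
    have ψinj : Function.Injective ψ := by
      intro x y hxy
      exact e.symm.injective (Subtype.ext hxy)
    have key : ∀ (m m' : ℕ) (hm : m ∈ H) (hm' : m' ∈ H),
        m • ψ ⟨m', hm'⟩ = m' • ψ ⟨m, hm⟩ := by
      intro m m' hm hm'
      rw [← map_nsmul, ← map_nsmul]
      congr 1
      ext
      simp [mul_comm]
    set a := ψ ⟨n, hnH⟩ with ha
    set b := ψ ⟨n + 1, hn1H⟩ with hb
    have hab : (n + 1) • a = n • b := key (n+1) n hn1H hnH
    have hdvd : ∀ i, n ∣ a i := by
      intro i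
      have hi := congrFun hab i
      simp only [Pi.smul_apply, smul_eq_mul] at hi
      have hcop : Nat.Coprime n (n + 1) := by simp [Nat.Coprime, Nat.gcd_self_add_left]
      exact hcop.dvd_of_dvd_mul_left ⟨b i, hi⟩
    set f : Fin k → ℕ := fun i => a i / n with hf
    have haf : a = n • f := by
      funext i
      simp only [hf, Pi.smul_apply, smul_eq_mul]
      exact (Nat.mul_div_cancel' (hdvd i)).symm
    have hψf : ∀ (m : ℕ) (hm : m ∈ H), ψ ⟨m, hm⟩ = m • f := by
      intro m hm
      have h1 : n • ψ ⟨m, hm⟩ = n • (m • f) := by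
        rw [smul_comm, ← haf]
        exact key n m hnH hm
      funext i
      have := congrFun h1 i
      simp only [Pi.smul_apply, smul_eq_mul] at this ⊢
      exact Nat.eq_of_mul_eq_mul_left hnpos this
    refine ⟨f, ?_, ?_⟩
    · intro hf0
      have : a = 0 := by rw [haf, hf0, smul_zero]
      have h0 : ψ ⟨n, hnH⟩ = ψ 0 := by
        rw [map_zero]
        exact this
      have := ψinj h0
      have : n = 0 := congrArg Subtype.val this
      omega
    · rw [closure_smul_eq, ← hH]
      ext x
      constructor
      · intro hx
        refine ⟨(e ⟨x, hx⟩ : ℕ), (e ⟨x, hx⟩).2, ?_⟩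
        have := hψf (e ⟨x, hx⟩ : ℕ) (e ⟨x, hx⟩).2
        simp only [hψ, AddMonoidHom.coe_comp, Function.comp_apply] at this
        rw [show (⟨(e ⟨x, hx⟩ : ℕ), (e ⟨x, hx⟩).2⟩ : H) = e ⟨x, hx⟩ from rfl] at this
        simp only [AddEquiv.toAddMonoidHom_eq_coe, AddMonoidHom.coe_coe,
          AddEquiv.symm_apply_apply, AddSubmonoid.coe_subtype] at this
        exact this.symm
      · rintro ⟨m, hm, rfl⟩
        have := hψf m hm
        have hmem' : ψ ⟨m, hm⟩ ∈ F := by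
          simp only [hψ, AddMonoidHom.coe_comp, Function.comp_apply,
            AddSubmonoid.coe_subtype]
          exact (e.symm ⟨m, hm⟩).2
        rw [this] at hmem'
        exact hmem'
  · rintro ⟨f, hf0, rfl⟩
    rw [closure_smul_eq, ← hH]
    set g : H →+ (Fin k → ℕ) := (smulHom f).comp H.subtype with hg
    have hrange : ∀ x : H, g x ∈ AddSubmonoid.map (smulHom f) H := by
      intro x
      exact ⟨(x : ℕ), x.2, rfl⟩
    set g' : H →+ (AddSubmonoid.map (smulHom f) H) :=
      (g.codRestrict _ hrange) with hg'
    have hbij : Function.Bijective g' := by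
      constructor
      · intro x y hxy
        have : g x = g y := congrArg Subtype.val hxy
        have := smulHom_inj hf0 this
        exact Subtype.ext this
      · rintro ⟨x, m, hm, rfl⟩
        exact ⟨⟨m, hm⟩, rfl⟩
    exact ⟨(AddEquiv.ofBijective g' hbij).symm⟩
end
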